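/- Let d0 > 0, β > 0, σ > 0, N ≥ 1, let x_1, …, x_N ∈ ℝ², let s ∈ ℝ², let A > 0, and let W_j ⊂ ℝ² be a compact measurable set with Lebesgue area A_j. Define g_i(y) = ln( (d0 + ‖y − x_i‖^β) / (d0 + ‖s − x_i‖^β) ). Suppose U_j ≥ 0 and L_j > 0 satisfy |g_i(y)| ≤ U_j for all y ∈ W_j and all i, and Σ_{i=1}^{N} g_i(y)² ≥ L_j for all y ∈ W_j; set η_j = √(U_j² + L_j/(2N)) − U_j. Let n = (n_1, …, n_N) be independent Gaussian random variables with mean 0 and variance σ², and define the random variable F_j(n) = (1/(A (2πσ²)^{N/2})) ∫_{W_j} exp( − Σ_{i=1}^{N} (g_i(y) + n_i)² / (2σ²) ) dy. Then Prob[ F_j(n) ≤ ε_j(σ) ] ≥ μ_j(σ), where ε_j(σ) = A_j · exp(−L_j/(4σ²)) / (A (2πσ²)^{N/2}) and μ_j(σ) = (1 − 2·Q(η_j/σ))^N. -/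

import Mathlib

/-!
On the box `|n i| ≤ η` the noise cannot cancel the signal: `|g_i n_i| ≤ U η` gives
`(g_i + n_i)² ≥ g_i² - 2 U η`, and `η` is chosen so that `2 N U η ≤ L / 2`, hence
`∑ (g_i + n_i)² ≥ L / 2` on `W` and the integrand is at most `exp (-L / (4 σ²))`. So `F ≤ ε` on the
box, whose probability is `P(|n_1| ≤ η) ^ N = (1 - 2 Q(η / σ)) ^ N` by independence and the
symmetry of the Gaussian.
-/

open Real MeasureTheory ProbabilityTheory

lemma sq_sub_two_mul_mul_le_sq_add {g n U η : ℝ} (hg : |g| ≤ U) (hn : |n| ≤ η) :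
    g ^ 2 - 2 * U * η ≤ (g + n) ^ 2 := by
  have hgn : |g * n| ≤ U * η := by
    rw [abs_mul]
    exact mul_le_mul hg hn (abs_nonneg n) ((abs_nonneg g).trans hg)
  nlinarith [neg_abs_le (g * n), sq_nonneg n]

lemma half_le_sum_sq_add {ι : Type*} [Fintype ι] {g n : ι → ℝ} {U η L : ℝ}
    (hg : ∀ i, |g i| ≤ U) (hn : ∀ i, |n i| ≤ η) (hL : L ≤ ∑ i, g i ^ 2)
    (hη : Fintype.card ι * (2 * U * η) ≤ L / 2) :
    L / 2 ≤ ∑ i, (g i + n i) ^ 2 := by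
  have h := Finset.sum_le_sum fun i (_ : i ∈ Finset.univ) =>
    sq_sub_two_mul_mul_le_sq_add (hg i) (hn i)
  rw [Finset.sum_sub_distrib, Finset.sum_const, Finset.card_univ, nsmul_eq_mul] at h
  linarith

lemma two_mul_mul_sqrt_sq_add_sub_le (U : ℝ) {c : ℝ} (hc : 0 ≤ c) :
    2 * U * (√(U ^ 2 + c) - U) ≤ c := by
  have h := Real.sq_sqrt (add_nonneg (sq_nonneg U) hc)
  nlinarith [sq_nonneg (√(U ^ 2 + c) - U)]

lemma natCast_mul_div_two_mul_le {L : ℝ} (hL : 0 ≤ L) (N : ℕ) : N * (L / (2 * N)) ≤ L / 2 := by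
  rcases N.eq_zero_or_pos with rfl | hN
  · simpa using div_nonneg hL zero_le_two
  · exact le_of_eq (by field_simp)

lemma setIntegral_exp_neg_sum_sq_add_le {α ι : Type*} [MeasurableSpace α] [Fintype ι]
    {μ : Measure α} {W : Set α} (hW : μ W < ⊤) {g : ι → α → ℝ} {n : ι → ℝ} {U η L : ℝ} (σ : ℝ)
    (hg : ∀ y ∈ W, ∀ i, |g i y| ≤ U) (hL : ∀ y ∈ W, L ≤ ∑ i, g i y ^ 2)
    (hn : ∀ i, |n i| ≤ η) (hη : Fintype.card ι * (2 * U * η) ≤ L / 2) :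
    ∫ y in W, exp (-(∑ i, (g i y + n i) ^ 2) / (2 * σ ^ 2)) ∂μ
      ≤ μ.real W * exp (-L / (4 * σ ^ 2)) := by
  refine (Real.le_norm_self _).trans <|
    (norm_setIntegral_le_of_norm_le_const hW fun y hy => ?_).trans_eq (mul_comm _ _)
  rw [norm_of_nonneg (exp_pos _).le, exp_le_exp]
  have hsum := half_le_sum_sq_add (hg y hy) hn (hL y hy) hη
  calc -(∑ i, (g i y + n i) ^ 2) / (2 * σ ^ 2) ≤ -(L / 2) / (2 * σ ^ 2) :=
        div_le_div_of_nonneg_right (neg_le_neg hsum) (by positivity)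
    _ = -L / (4 * σ ^ 2) := by ring

lemma gaussianReal_zero_Iio_neg (v : NNReal) (a : ℝ) :
    gaussianReal 0 v (Set.Iio (-a)) = gaussianReal 0 v (Set.Ioi a) := by
  have h := congrArg (· (Set.Ioi a)) (gaussianReal_map_neg (μ := 0) (v := v))
  simp only [neg_zero] at h
  rw [← h, Measure.map_apply measurable_neg measurableSet_Ioi, Set.neg_preimage, Set.neg_Ioi]

lemma gaussianReal_zero_real_Icc_neg (v : NNReal) {a : ℝ} (ha : 0 ≤ a) :
    (gaussianReal 0 v).real (Set.Icc (-a) a) = 1 - 2 * (gaussianReal 0 v).real (Set.Ioi a) := by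
  have hcompl : (Set.Icc (-a) a)ᶜ = Set.Iio (-a) ∪ Set.Ioi a := by
    ext z
    simp only [Set.mem_compl_iff, Set.mem_Icc, not_and_or, not_le, Set.mem_union, Set.mem_Iio,
      Set.mem_Ioi]
  have hdisj : Disjoint (Set.Iio (-a)) (Set.Ioi a) :=
    Set.Iio_disjoint_Ioi_of_le (by linarith)
  rw [← compl_compl (Set.Icc (-a) a), probReal_compl_eq_one_sub measurableSet_Icc.compl, hcompl,
    measureReal_union hdisj measurableSet_Ioi, measureReal_def, gaussianReal_zero_Iio_neg,
    ← measureReal_def]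
  ring

lemma gaussianReal_zero_sq_real_Ioi {σ : ℝ} (hσ : 0 < σ) (a : ℝ) :
    (gaussianReal 0 ⟨σ ^ 2, sq_nonneg σ⟩).real (Set.Ioi a)
      = (gaussianReal 0 1).real (Set.Ioi (a / σ)) := by
  have h : (gaussianReal 0 1).map (σ * ·) = gaussianReal 0 ⟨σ ^ 2, sq_nonneg σ⟩ := by
    rw [gaussianReal_map_const_mul, mul_zero, mul_one]
    rfl
  rw [← h, map_measureReal_apply (measurable_const_mul σ) measurableSet_Ioi]
  congr 1
  ext y
  simp [div_lt_iff₀' hσ]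

lemma gaussianReal_zero_one_real_Ioi (t : ℝ) :
    (gaussianReal 0 1).real (Set.Ioi t)
      = (1 / √(2 * π)) * ∫ y in Set.Ioi t, exp (-y ^ 2 / 2) := by
  rw [measureReal_def, gaussianReal_apply_eq_integral 0 one_ne_zero,
    ENNReal.toReal_ofReal (setIntegral_nonneg measurableSet_Ioi fun x _ =>
      gaussianPDFReal_nonneg 0 1 x), ← integral_const_mul]
  simp [gaussianPDFReal]

lemma measureReal_pi_univ_pi_const {ι α : Type*} [Fintype ι] [MeasurableSpace α]
    (μ : Measure α) [SigmaFinite μ] (S : Set α) :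
    (Measure.pi fun _ : ι => μ).real (Set.univ.pi fun _ => S) = μ.real S ^ Fintype.card ι := by
  simp [measureReal_def, Measure.pi_pi, ENNReal.toReal_pow]

theorem elimination_wrong_hypothesis_general
    (d0 β σ A : ℝ) (hσ : 0 < σ) (hA : 0 < A)
    (N : ℕ)
    (x : Fin N → EuclideanSpace ℝ (Fin 2)) (s : EuclideanSpace ℝ (Fin 2))
    (W : Set (EuclideanSpace ℝ (Fin 2))) (hWc : IsCompact W)
    (U L : ℝ) (hL : 0 < L)
    (hgU : ∀ y ∈ W, ∀ i,
      |Real.log ((d0 + ‖y - x i‖ ^ β) / (d0 + ‖s - x i‖ ^ β))| ≤ U)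
    (hgL : ∀ y ∈ W,
      L ≤ ∑ i, (Real.log ((d0 + ‖y - x i‖ ^ β) / (d0 + ‖s - x i‖ ^ β))) ^ 2)
    (η : ℝ) (hη : η = Real.sqrt (U ^ 2 + L / (2 * N)) - U)
    (ε : ℝ) (hε : ε = (volume W).toReal * Real.exp (-L / (4 * σ ^ 2))
        / (A * (2 * Real.pi * σ ^ 2) ^ ((N : ℝ) / 2)))
    (Q : ℝ → ℝ)
    (hQ : ∀ t : ℝ, Q t = (1 / Real.sqrt (2 * Real.pi))
        * ∫ y in Set.Ioi t, Real.exp (-y ^ 2 / 2)) :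
    ((Measure.pi fun _ : Fin N => gaussianReal 0 ⟨σ ^ 2, sq_nonneg σ⟩)
        {n : Fin N → ℝ |
          (1 / (A * (2 * Real.pi * σ ^ 2) ^ ((N : ℝ) / 2))) *
            ∫ y in W, Real.exp (-(∑ i,
              (Real.log ((d0 + ‖y - x i‖ ^ β) / (d0 + ‖s - x i‖ ^ β)) + n i) ^ 2)
              / (2 * σ ^ 2)) ≤ ε}).toReal
      ≥ (1 - 2 * Q (η / σ)) ^ N := by
  have hc : 0 ≤ L / (2 * N) := by positivity
  have hη0 : 0 ≤ η := hη ▸ sub_nonneg.2 (Real.le_sqrt_of_sq_le (by linarith))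
  have hmargin : (Fintype.card (Fin N) : ℝ) * (2 * U * η) ≤ L / 2 := by
    rw [Fintype.card_fin, hη]
    exact (mul_le_mul_of_nonneg_left (two_mul_mul_sqrt_sq_add_sub_le U hc) N.cast_nonneg).trans
      (natCast_mul_div_two_mul_le hL.le N)
  -- The variance `⟨σ ^ 2, _⟩` elaborates as a subtype term, which blocks rewriting and instance
  -- search; naming the measure avoids both.
  set μ := gaussianReal 0 (⟨σ ^ 2, sq_nonneg σ⟩ : NNReal)
  have : IsProbabilityMeasure μ := instIsProbabilityMeasureGaussianReal 0 _
  have hIcc : μ.real (Set.Icc (-η) η) = 1 - 2 * Q (η / σ) := by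
    rw [hQ, ← gaussianReal_zero_one_real_Ioi, ← gaussianReal_zero_sq_real_Ioi hσ]
    exact gaussianReal_zero_real_Icc_neg _ hη0
  calc (1 - 2 * Q (η / σ)) ^ N = μ.real (Set.Icc (-η) η) ^ Fintype.card (Fin N) := by
        rw [Fintype.card_fin, hIcc]
    _ = (Measure.pi fun _ : Fin N => μ).real (Set.univ.pi fun _ => Set.Icc (-η) η) :=
        (measureReal_pi_univ_pi_const μ _).symm
    _ ≤ _ := measureReal_mono fun n hn => ?_
  refine (mul_le_mul_of_nonneg_left (setIntegral_exp_neg_sum_sq_add_le hWc.measure_lt_top σ hgU hgL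
    (fun i => abs_le.2 (hn i trivial)) hmargin) (by positivity)).trans_eq ?_
  rw [hε, measureReal_def]
  ring

/-- Elimination property of the wrong hypothesis: with probability at least
μ_j(σ) = (1 - 2Q(η_j/σ))^N, the MAP quantity for a region not containing the
source is at most ε_j(σ). -/
theorem elimination_wrong_hypothesis
    (d0 β σ A : ℝ) (hd0 : 0 < d0) (hβ : 0 < β) (hσ : 0 < σ) (hA : 0 < A)
    (N : ℕ) (hN : 1 ≤ N)
    (x : Fin N → EuclideanSpace ℝ (Fin 2)) (s : EuclideanSpace ℝ (Fin 2))
    (W : Set (EuclideanSpace ℝ (Fin 2))) (hWc : IsCompact W) (hWm : MeasurableSet W)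
    (U L : ℝ) (hU : 0 ≤ U) (hL : 0 < L)
    (hgU : ∀ y ∈ W, ∀ i,
      |Real.log ((d0 + ‖y - x i‖ ^ β) / (d0 + ‖s - x i‖ ^ β))| ≤ U)
    (hgL : ∀ y ∈ W,
      L ≤ ∑ i, (Real.log ((d0 + ‖y - x i‖ ^ β) / (d0 + ‖s - x i‖ ^ β))) ^ 2)
    (η : ℝ) (hη : η = Real.sqrt (U ^ 2 + L / (2 * N)) - U)
    (ε : ℝ) (hε : ε = (volume W).toReal * Real.exp (-L / (4 * σ ^ 2))
        / (A * (2 * Real.pi * σ ^ 2) ^ ((N : ℝ) / 2)))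
    (Q : ℝ → ℝ)
    (hQ : ∀ t : ℝ, Q t = (1 / Real.sqrt (2 * Real.pi))
        * ∫ y in Set.Ioi t, Real.exp (-y ^ 2 / 2)) :
    ((Measure.pi fun _ : Fin N => gaussianReal 0 ⟨σ ^ 2, sq_nonneg σ⟩)
        {n : Fin N → ℝ |
          (1 / (A * (2 * Real.pi * σ ^ 2) ^ ((N : ℝ) / 2))) *
            ∫ y in W, Real.exp (-(∑ i,
              (Real.log ((d0 + ‖y - x i‖ ^ β) / (d0 + ‖s - x i‖ ^ β)) + n i) ^ 2)
              / (2 * σ ^ 2)) ≤ ε}).toReal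
      ≥ (1 - 2 * Q (η / σ)) ^ N :=
  elimination_wrong_hypothesis_general d0 β σ A hσ hA N x s W hWc U L hL hgU hgL η hη ε hε Q hQ
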